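/- Existence for large λ: there exists λ* > 0 such that for all λ ≥ λ*, the equation Δv = -λ e^{g(v₀+v)}(e^{g(v₀+v)}-1)² + 4πN/|V| has a solution on the finite connected graph G. -/

import Mathlib

/-!
The constant `-c`, with `c` so large that `v₀ - c < 0`, is a subsolution once
`λ e^{g(v₀-c)} (e^{g(v₀-c)} - 1)² ≥ 4πN/|V|` everywhere, and `-v₀` is a supersolution because the
nonlinearity vanishes at `0` and the Dirac masses enter with a positive sign. Since `g` inverts
`1 + s - e^s`, the function `t ↦ e^{g t}(e^{g t} - 1)² + 2t` is monotone on `t ≤ 0`, so for small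
`ε` the map `v ↦ v + ε (Δv + λ e^{g(v₀+v)}(e^{g(v₀+v)} - 1)² - 4πN/|V|)` is monotone on the order
interval between the two, and Knaster–Tarski gives a solution with `v₀ + v ≤ 0`. If `v₀ + v`
vanished somewhere, the strong maximum principle would force `v₀ + v ≡ 0`, which is impossible at
a vortex point `p_j`.
-/

open Finset Real

theorem exists_isFixedPt_of_monotoneOn_Icc {α : Type*} [ConditionallyCompleteLattice α]
    {f : α → α} {a b : α} (hab : a ≤ b) (hf : MonotoneOn f (Set.Icc a b))
    (ha : a ≤ f a) (hb : f b ≤ b) : ∃ x ∈ Set.Icc a b, Function.IsFixedPt f x := by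
  have : Fact (a ≤ b) := ⟨hab⟩
  have hmaps : ∀ x ∈ Set.Icc a b, f x ∈ Set.Icc a b := fun x hx =>
    ⟨ha.trans (hf ⟨le_rfl, hab⟩ hx hx.1), (hf hx ⟨hab, le_rfl⟩ hx.2).trans hb⟩
  let F : Set.Icc a b →o Set.Icc a b :=
    ⟨fun x => ⟨f x, hmaps x x.2⟩, fun x y hxy => hf x.2 y.2 hxy⟩
  exact ⟨F.lfp, F.lfp.2, congrArg Subtype.val F.map_lfp⟩

theorem exists_pos_forall_le_mul {V : Type*} [Fintype V] {K : V → ℝ} (hK : ∀ x, 0 < K x)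
    (A : ℝ) : ∃ lam₀ : ℝ, 0 < lam₀ ∧ ∀ lam : ℝ, lam₀ ≤ lam → ∀ x, A ≤ lam * K x := by
  have hsum : 0 ≤ ∑ x, |A| / K x := sum_nonneg fun x _ => div_nonneg (abs_nonneg A) (hK x).le
  refine ⟨∑ x, |A| / K x + 1, by linarith, fun lam hlam x => ?_⟩
  have hx : |A| / K x ≤ lam :=
    (single_le_sum (fun y _ => div_nonneg (abs_nonneg A) (hK y).le) (mem_univ x)).trans
      (by linarith)
  exact (le_abs_self A).trans ((div_le_iff₀ (hK x)).mp hx)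

section RealFunctions

theorem eq_zero_of_one_add_sub_exp_eq_zero {s : ℝ} (hs : 1 + s - exp s = 0) : s = 0 := by
  by_contra hne
  linarith [add_one_lt_exp hne]

theorem strictMonoOn_one_add_sub_exp : StrictMonoOn (fun s : ℝ => 1 + s - exp s) (Set.Iic 0) := by
  refine strictMonoOn_of_deriv_pos (convex_Iic 0) (by fun_prop) fun x hx => ?_
  rw [interior_Iic] at hx
  have hderiv : HasDerivAt (fun s : ℝ => 1 + s - exp s) (1 - exp x) x :=
    ((hasDerivAt_id x).const_add 1).sub (hasDerivAt_exp x)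
  rw [hderiv.deriv, sub_pos]
  exact exp_lt_one_iff.mpr hx

theorem monotone_exp_mul_sub_one_sq_add_two_mul :
    Monotone (fun s : ℝ => exp s * (exp s - 1) ^ 2 + 2 * (1 + s - exp s)) := by
  have hderiv : ∀ s : ℝ, HasDerivAt (fun s : ℝ => exp s * (exp s - 1) ^ 2 + 2 * (1 + s - exp s))
      ((exp s - 1) ^ 2 * (3 * exp s + 2)) s := by
    intro s
    have hexp := hasDerivAt_exp s
    have hprod : HasDerivAt (fun s => exp s * (exp s - 1) ^ 2)
        (exp s * (exp s - 1) ^ 2 + exp s * ((2 : ℕ) * (exp s - 1) ^ 1 * exp s)) s :=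
      hexp.mul ((hexp.sub_const 1).pow 2)
    have hlin : HasDerivAt (fun s => 2 * (1 + s - exp s)) (2 * (1 - exp s)) s :=
      (((hasDerivAt_id' s).const_add 1).sub hexp).const_mul 2
    refine (hprod.add hlin).congr_deriv ?_
    push_cast
    ring
  refine monotone_of_deriv_nonneg (fun s => (hderiv s).differentiableAt) fun s => ?_
  rw [(hderiv s).deriv]
  positivity

noncomputable def reactionTerm (g : ℝ → ℝ) (t : ℝ) : ℝ := exp (g t) * (exp (g t) - 1) ^ 2

variable {g : ℝ → ℝ}

theorem reactionTerm_zero (hg : ∀ t ≤ (0:ℝ), 1 + g t - exp (g t) = t) : reactionTerm g 0 = 0 := by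
  simp [reactionTerm, eq_zero_of_one_add_sub_exp_eq_zero (hg 0 le_rfl)]

theorem reactionTerm_pos (hg : ∀ t ≤ (0:ℝ), 1 + g t - exp (g t) = t)
    (hgneg : ∀ t ≤ (0:ℝ), g t ≤ 0) {t : ℝ} (ht : t < 0) : 0 < reactionTerm g t := by
  have hgt : g t < 0 := (hgneg t ht.le).lt_of_ne fun h => ht.ne <| by
    simpa [h] using (hg t ht.le).symm
  have hexp : exp (g t) - 1 < 0 := sub_neg.mpr (exp_lt_one_iff.mpr hgt)
  exact mul_pos (exp_pos _) (sq_pos_of_neg hexp)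

theorem monotoneOn_of_one_add_sub_exp (hg : ∀ t ≤ (0:ℝ), 1 + g t - exp (g t) = t)
    (hgneg : ∀ t ≤ (0:ℝ), g t ≤ 0) : MonotoneOn g (Set.Iic 0) := by
  intro s hs t ht hst
  by_contra! hlt
  have := strictMonoOn_one_add_sub_exp (hgneg t ht) (hgneg s hs) hlt
  simp only [hg s hs, hg t ht] at this
  linarith

theorem monotoneOn_reactionTerm_add_two_mul (hg : ∀ t ≤ (0:ℝ), 1 + g t - exp (g t) = t)
    (hgneg : ∀ t ≤ (0:ℝ), g t ≤ 0) :
    MonotoneOn (fun t => reactionTerm g t + 2 * t) (Set.Iic 0) := by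
  intro s hs t ht hst
  have := monotone_exp_mul_sub_one_sq_add_two_mul (monotoneOn_of_one_add_sub_exp hg hgneg hs ht hst)
  simp only [hg s hs, hg t ht] at this
  simpa only [reactionTerm] using this

end RealFunctions

section GraphLaplacian

variable {V : Type*} [Fintype V] {w : V → V → ℝ} {mu : V → ℝ}

noncomputable def graphLaplacian (w : V → V → ℝ) (mu : V → ℝ) (v : V → ℝ) (x : V) : ℝ :=
  (mu x)⁻¹ * ∑ y, w x y * (v y - v x)

theorem graphLaplacian_add (u v : V → ℝ) (x : V) :
    graphLaplacian w mu (u + v) x = graphLaplacian w mu u x + graphLaplacian w mu v x := by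
  simp only [graphLaplacian, Pi.add_apply, ← mul_add, ← sum_add_distrib]
  congr 1
  exact sum_congr rfl fun y _ => by ring

theorem graphLaplacian_sub (u v : V → ℝ) (x : V) :
    graphLaplacian w mu (u - v) x = graphLaplacian w mu u x - graphLaplacian w mu v x := by
  simp only [graphLaplacian, Pi.sub_apply, ← mul_sub, ← sum_sub_distrib]
  congr 1
  exact sum_congr rfl fun y _ => by ring

theorem graphLaplacian_neg (u : V → ℝ) (x : V) :
    graphLaplacian w mu (-u) x = -graphLaplacian w mu u x := by
  simp only [graphLaplacian, Pi.neg_apply, ← mul_neg, ← sum_neg_distrib]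
  congr 1
  exact sum_congr rfl fun y _ => by ring

theorem graphLaplacian_const (c : ℝ) (x : V) : graphLaplacian w mu (fun _ => c) x = 0 := by
  simp [graphLaplacian]

theorem neg_degree_mul_le_graphLaplacian (hw : ∀ x y, 0 ≤ w x y) (hmu : ∀ x, 0 < mu x)
    {u : V → ℝ} (hu : 0 ≤ u) (x : V) :
    -((∑ y, w x y) / mu x * u x) ≤ graphLaplacian w mu u x := by
  have hsplit : ∑ y, w x y * (u y - u x) = ∑ y, w x y * u y - (∑ y, w x y) * u x := by
    simp only [mul_sub, sum_sub_distrib, sum_mul]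
  have hpos : 0 ≤ (mu x)⁻¹ * ∑ y, w x y * u y :=
    mul_nonneg (inv_pos.mpr (hmu x)).le (sum_nonneg fun y _ => mul_nonneg (hw x y) (hu y))
  rw [graphLaplacian, hsplit, div_eq_inv_mul, mul_sub, mul_assoc]
  linarith

theorem exists_graphLaplacian_add_eq_zero_of_sub_super (hw : ∀ x y, 0 ≤ w x y)
    (hmu : ∀ x, 0 < mu x) (F : V → ℝ → ℝ) {κ : ℝ} (hκ : 0 ≤ κ) {lo hi : V → ℝ} (hle : lo ≤ hi)
    (hF : ∀ x, MonotoneOn (fun s => F x s + κ * s) (Set.Icc (lo x) (hi x)))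
    (hlo : ∀ x, 0 ≤ graphLaplacian w mu lo x + F x (lo x))
    (hhi : ∀ x, graphLaplacian w mu hi x + F x (hi x) ≤ 0) :
    ∃ v ∈ Set.Icc lo hi, ∀ x, graphLaplacian w mu v x + F x (v x) = 0 := by
  set r : V → ℝ := fun x => (∑ y, w x y) / mu x + κ
  have hr : ∀ x, 0 ≤ r x := fun x =>
    add_nonneg (div_nonneg (sum_nonneg fun y _ => hw x y) (hmu x).le) hκ
  have hε : ∀ x, 0 < (r x + 1)⁻¹ := fun x => inv_pos.mpr (by linarith [hr x])
  set T : (V → ℝ) → V → ℝ :=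
    fun v x => v x + (r x + 1)⁻¹ * (graphLaplacian w mu v x + F x (v x))
  have hT : MonotoneOn T (Set.Icc lo hi) := by
    intro v hv v' hv' hvv' x
    have hΔ := neg_degree_mul_le_graphLaplacian hw hmu (sub_nonneg.mpr hvv') x
    rw [graphLaplacian_sub, Pi.sub_apply] at hΔ
    have hFx : F x (v x) + κ * v x ≤ F x (v' x) + κ * v' x :=
      hF x ⟨hv.1 x, hv.2 x⟩ ⟨hv'.1 x, hv'.2 x⟩ (hvv' x)
    have hstep : -(r x * (v' x - v x)) ≤
        graphLaplacian w mu v' x + F x (v' x) - (graphLaplacian w mu v x + F x (v x)) := by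
      simp only [r]
      linarith
    -- `T v' x - T v x ≥ d - ε r d = ε d ≥ 0` with `d = v' x - v x` and `ε = (r x + 1)⁻¹`
    have hεr : (r x + 1)⁻¹ * (r x * (v' x - v x)) + (r x + 1)⁻¹ * (v' x - v x) = v' x - v x := by
      rw [← mul_add, ← add_one_mul, ← mul_assoc, inv_mul_cancel₀ (by linarith [hr x]), one_mul]
    have := mul_le_mul_of_nonneg_left hstep (hε x).le
    have := mul_nonneg (hε x).le (sub_nonneg.mpr (hvv' x))
    simp only [T]
    linarith
  obtain ⟨v, hv, hfix⟩ := exists_isFixedPt_of_monotoneOn_Icc hle hT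
    (fun x => le_add_of_nonneg_right (mul_nonneg (hε x).le (hlo x)))
    (fun x => add_le_of_nonpos_right (mul_nonpos_of_nonneg_of_nonpos (hε x).le (hhi x)))
  refine ⟨v, hv, fun x => ?_⟩
  have := congrFun hfix.eq x
  simp only [T, add_eq_left] at this
  exact (mul_eq_zero.mp this).resolve_left (hε x).ne'

theorem eq_of_le_of_graphLaplacian_nonneg (hw : ∀ x y, 0 ≤ w x y) (hmu : ∀ x, 0 < mu x)
    {u : V → ℝ} {b y : V} (hle : ∀ z, u z ≤ u b) (hΔ : 0 ≤ graphLaplacian w mu u b)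
    (hby : 0 < w b y) : u y = u b := by
  have hterm : ∀ z ∈ univ, w b z * (u z - u b) ≤ 0 := fun z _ =>
    mul_nonpos_of_nonneg_of_nonpos (hw b z) (sub_nonpos.mpr (hle z))
  have hsum : ∑ z, w b z * (u z - u b) = 0 :=
    le_antisymm (sum_nonpos hterm) (nonneg_of_mul_nonneg_right hΔ (inv_pos.mpr (hmu b)))
  have := (sum_eq_zero_iff_of_nonpos hterm).mp hsum y (mem_univ y)
  linarith [(mul_eq_zero.mp this).resolve_left hby.ne']

theorem eq_of_le_of_graphLaplacian_nonneg_of_connected (hw : ∀ x y, 0 ≤ w x y)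
    (hmu : ∀ x, 0 < mu x) (hconn : ∀ x y : V, Relation.ReflTransGen (fun a b => 0 < w a b) x y)
    {u : V → ℝ} {m : ℝ} (hle : ∀ z, u z ≤ m) (hΔ : ∀ b, u b = m → 0 ≤ graphLaplacian w mu u b)
    {x : V} (hx : u x = m) (y : V) : u y = m := by
  induction hconn x y with
  | refl => exact hx
  | tail _ hbc ih =>
    exact (eq_of_le_of_graphLaplacian_nonneg hw hmu (ih ▸ hle) (hΔ _ ih) hbc).trans ih

theorem lt_zero_of_graphLaplacian_eq_sub (hw : ∀ x y, 0 ≤ w x y) (hmu : ∀ x, 0 < mu x)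
    (hconn : ∀ x y : V, Relation.ReflTransGen (fun a b => 0 < w a b) x y)
    {f : ℝ → ℝ} (hf : f 0 = 0) {u δ : V → ℝ} (hδ : ∀ x, 0 ≤ δ x) {x₀ : V} (hx₀ : 0 < δ x₀)
    (hu : ∀ x, u x ≤ 0) (heq : ∀ x, graphLaplacian w mu u x = δ x - f (u x)) (x : V) :
    u x < 0 := by
  refine (hu x).lt_of_ne fun hx => ?_
  have hzero : u = fun _ => 0 := funext <| eq_of_le_of_graphLaplacian_nonneg_of_connected hw hmu
    hconn hu (fun b hb => by rw [heq, hb, hf, sub_zero]; exact hδ b) hx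
  have := heq x₀
  rw [hzero, graphLaplacian_const, hf, sub_zero] at this
  exact hx₀.ne this

theorem exists_graphLaplacian_eq_reactionTerm {g : ℝ → ℝ} (hw : ∀ x y, 0 ≤ w x y)
    (hmu : ∀ x, 0 < mu x) (hg : ∀ t ≤ (0:ℝ), 1 + g t - exp (g t) = t)
    (hgneg : ∀ t ≤ (0:ℝ), g t ≤ 0) {v0 : V → ℝ} {lam A c : ℝ} (hlam : 0 ≤ lam)
    (hv0 : ∀ x, -A ≤ graphLaplacian w mu v0 x) (hc : ∀ x, v0 x + c ≤ 0)
    (hcA : ∀ x, A ≤ lam * reactionTerm g (v0 x + c)) :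
    ∃ v : V → ℝ, (∀ x, v0 x + v x ≤ 0) ∧
      ∀ x, graphLaplacian w mu v x = -lam * reactionTerm g (v0 x + v x) + A := by
  have hF : ∀ x, MonotoneOn (fun s => lam * reactionTerm g (v0 x + s) - A + 2 * lam * s)
      (Set.Icc c (-v0 x)) := by
    intro x s hs t ht hst
    have := monotoneOn_reactionTerm_add_two_mul hg hgneg (a := v0 x + s) (b := v0 x + t)
      (by simp only [Set.mem_Iic]; linarith [hs.2]) (by simp only [Set.mem_Iic]; linarith [ht.2])
      (by linarith)
    have := mul_le_mul_of_nonneg_left this hlam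
    simp only at this ⊢
    linarith
  obtain ⟨v, hv, hsol⟩ := exists_graphLaplacian_add_eq_zero_of_sub_super hw hmu
    (fun x s => lam * reactionTerm g (v0 x + s) - A) (by positivity : 0 ≤ 2 * lam)
    (lo := fun _ => c) (hi := -v0) (fun x => show c ≤ -v0 x by linarith [hc x]) hF
    (fun x => by simp only [graphLaplacian_const]; linarith [hcA x])
    (fun x => by
      simp only [graphLaplacian_neg, Pi.neg_apply, add_neg_cancel, reactionTerm_zero hg]
      linarith [hv0 x])
  exact ⟨v, fun x => by linarith [show v x ≤ -v0 x from hv.2 x], fun x => by linarith [hsol x]⟩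

end GraphLaplacian

theorem stmt_15_general {V : Type} [Fintype V] [DecidableEq V] (w : V → V → ℝ) (mu : V → ℝ)
    (hnonneg : ∀ x y, 0 ≤ w x y)
    (hmu : ∀ x, 0 < mu x)
    (hconn : ∀ x y : V, Relation.ReflTransGen (fun a b => 0 < w a b) x y)
    (g : ℝ → ℝ)
    (hg : ∀ t ≤ (0:ℝ), 1 + g t - Real.exp (g t) = t)
    (hgneg : ∀ t ≤ (0:ℝ), g t ≤ 0)
    (N : ℕ) (hN : 0 < N) (p : Fin N → V)
    (v0 : V → ℝ)
    (hv0 : ∀ x, (mu x)⁻¹ * ∑ y, w x y * (v0 y - v0 x) =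
      -(4 * π * N) / (∑ z, mu z) +
        4 * π * ∑ j, (if x = p j then (mu (p j))⁻¹ else 0)) :
    ∃ lam₀ : ℝ, 0 < lam₀ ∧ ∀ lam : ℝ, lam₀ ≤ lam →
      ∃ v : V → ℝ, (∀ x, v0 x + v x < 0) ∧
        ∀ x, (mu x)⁻¹ * ∑ y, w x y * (v y - v x) =
          -lam * Real.exp (g (v0 x + v x)) * (Real.exp (g (v0 x + v x)) - 1) ^ 2 +
            4 * π * N / (∑ z, mu z) := by
  set A : ℝ := 4 * π * N / ∑ z, mu z
  set δ : V → ℝ := fun x => 4 * π * ∑ j, if x = p j then (mu (p j))⁻¹ else 0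
  have hδ_term : ∀ x j, 0 ≤ if x = p j then (mu (p j))⁻¹ else 0 := fun x j => by
    split_ifs <;> simp [(hmu _).le]
  have hδ : ∀ x, 0 ≤ δ x := fun x => mul_nonneg (by positivity) (sum_nonneg fun j _ => hδ_term x j)
  have hδp : 0 < δ (p ⟨0, hN⟩) := by
    refine mul_pos (by positivity) (lt_of_lt_of_le ?_
      (single_le_sum (fun j _ => hδ_term (p ⟨0, hN⟩) j) (mem_univ ⟨0, hN⟩)))
    simpa using hmu _
  have hΔv0 : ∀ x, graphLaplacian w mu v0 x = -A + δ x := fun x => by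
    rw [graphLaplacian, hv0 x, neg_div]
  obtain ⟨c, hc⟩ := Finite.bddAbove_range v0
  have hK : ∀ x, 0 < reactionTerm g (v0 x + -(c + 1)) := fun x =>
    reactionTerm_pos hg hgneg (by linarith [hc ⟨x, rfl⟩])
  obtain ⟨lam₀, hlam₀, hlamK⟩ := exists_pos_forall_le_mul hK A
  refine ⟨lam₀, hlam₀, fun lam hlam => ?_⟩
  obtain ⟨v, hle, hv⟩ := exists_graphLaplacian_eq_reactionTerm hnonneg hmu hg hgneg
    (hlam₀.trans_le hlam).le (fun x => by linarith [hΔv0 x, hδ x])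
    (fun x => by linarith [hc ⟨x, rfl⟩]) (hlamK lam hlam)
  refine ⟨v, lt_zero_of_graphLaplacian_eq_sub hnonneg hmu hconn
    (f := fun t => lam * reactionTerm g t) (by simp [reactionTerm_zero hg]) hδ hδp hle
    fun x => ?_, fun x => (hv x).trans (by simp only [reactionTerm]; ring)⟩
  rw [← Pi.add_def, graphLaplacian_add, hΔv0, hv]
  ring

theorem stmt_15 {V : Type} [Fintype V] [DecidableEq V] (w : V → V → ℝ) (mu : V → ℝ)
    (hsymm : ∀ x y, w x y = w y x) (hnonneg : ∀ x y, 0 ≤ w x y)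
    (hmu : ∀ x, 0 < mu x)
    (hconn : ∀ x y : V, Relation.ReflTransGen (fun a b => 0 < w a b) x y)
    (g : ℝ → ℝ)
    (hg : ∀ t ≤ (0:ℝ), 1 + g t - Real.exp (g t) = t)
    (hgneg : ∀ t ≤ (0:ℝ), g t ≤ 0)
    (N : ℕ) (hN : 0 < N) (p : Fin N → V) (hp : Function.Injective p)
    (v0 : V → ℝ)
    (hv0 : ∀ x, (mu x)⁻¹ * ∑ y, w x y * (v0 y - v0 x) =
      -(4 * π * N) / (∑ z, mu z) +
        4 * π * ∑ j, (if x = p j then (mu (p j))⁻¹ else 0)) :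
    ∃ lam₀ : ℝ, 0 < lam₀ ∧ ∀ lam : ℝ, lam₀ ≤ lam →
      ∃ v : V → ℝ, (∀ x, v0 x + v x < 0) ∧
        ∀ x, (mu x)⁻¹ * ∑ y, w x y * (v y - v x) =
          -lam * Real.exp (g (v0 x + v x)) * (Real.exp (g (v0 x + v x)) - 1) ^ 2 +
            4 * π * N / (∑ z, mu z) :=
  stmt_15_general w mu hnonneg hmu hconn g hg hgneg N hN p v0 hv0
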